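/- arXiv:2007.05841 — 5 statements merged into one kernel-verified Lean document; each statement's English description precedes it below -/
import Mathlib

section
/- If A ⊆ S_n is nonempty and not (k,r)-pseudorandom, then there exist σ, σ' ∈ S_n and B' ⊆ A such that B := σB'σ' satisfies: (1) every τ ∈ B fixes every point of {n−k+1,…,n}; and (2) |B| ≥ |A|·r/(n)_k. -/
open Equiv Finset

/-- `A ⊆ S_n` is `(k, r)`-pseudorandom. -/
def Pseudorandom (n : ℕ) (A : Finset (Equiv.Perm (Fin n))) (k : ℕ) (r : ℚ) : Prop :=
  ∀ I J : Fin k ↪ Fin n,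
    ((A.filter fun π => ∀ j, π (J j) = I j).card : ℚ) / A.card < r / (n.descFactorial k)

lemma exists_perm_comp {n k : ℕ} (f g : Fin k ↪ Fin n) :
    ∃ σ : Equiv.Perm (Fin n), ∀ m, σ (f m) = g m := by
  classical
  let e : {x // x ∈ Set.range f} ≃ {x // x ∈ Set.range g} :=
    (Equiv.ofInjective f f.injective).symm.trans (Equiv.ofInjective g g.injective)
  refine ⟨e.extendSubtype, fun m => ?_⟩
  have hm : f m ∈ Set.range f := ⟨m, rfl⟩
  rw [e.extendSubtype_apply_of_mem _ hm]
  show ((g (((Equiv.ofInjective f f.injective).symm ⟨f m, hm⟩)) : Fin n)) = g m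
  congr 1
  exact (Equiv.ofInjective f f.injective).symm_apply_apply m

/-- if `A` is not `(k,r)`-pseudorandom there are `σ, σ'` and `B' ⊆ A` such
that `B = σB'σ'` fixes the last `k` points pointwise and `|B| ≥ |A|·r/(n)_k`. -/
theorem stmt11 (n k : ℕ) (r : ℚ) (A : Finset (Equiv.Perm (Fin n))) (hA : A.Nonempty)
    (h : ¬ Pseudorandom n A k r) :
    ∃ (σ σ' : Equiv.Perm (Fin n)) (B' : Finset (Equiv.Perm (Fin n))), B' ⊆ A ∧
      (∀ τ ∈ B'.image (fun τ => σ * τ * σ'), ∀ i : Fin n, n - k ≤ (i : ℕ) → τ i = i) ∧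
      (A.card : ℚ) * r / (n.descFactorial k) ≤ ((B'.image (fun τ => σ * τ * σ')).card : ℚ) := by
  classical
  unfold Pseudorandom at h
  push_neg at h
  obtain ⟨I, J, hIJ⟩ := h
  have hkn : k ≤ n := by
    simpa using Fintype.card_le_of_embedding I
  set B' := A.filter (fun π => ∀ j, π (J j) = I j) with hB'
  have hsub : B' ⊆ A := filter_subset _ _
  -- embedding onto the last k points
  let e : Fin k ↪ Fin n :=
    ⟨fun m => ⟨n - k + m, by omega⟩, fun a b hab => by
      simp only [Fin.mk.injEq] at hab
      exact Fin.ext (by omega)⟩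
  obtain ⟨σ, hσ⟩ := exists_perm_comp I e
  obtain ⟨σ', hσ'⟩ := exists_perm_comp e J
  refine ⟨σ, σ', B', hsub, ?_, ?_⟩
  · intro τ hτ i hi
    simp only [mem_image] at hτ
    obtain ⟨π, hπ, rfl⟩ := hτ
    have hπ' : ∀ j, π (J j) = I j := (mem_filter.mp hπ).2
    have him : i < n := i.isLt
    have : i = e ⟨(i : ℕ) - (n - k), by omega⟩ := by
      apply Fin.ext
      show (i : ℕ) = n - k + ((i : ℕ) - (n - k))
      omega
    rw [this]
    show σ (π (σ' (e _))) = e _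
    rw [hσ', hπ', hσ]
  · rw [card_image_of_injective _ (fun a b hab => by
      simpa using mul_left_cancel (mul_right_cancel hab))]
    have hA0 : (0 : ℚ) < A.card := by
      exact_mod_cast card_pos.mpr hA
    rw [le_div_iff₀ hA0] at hIJ
    have : (A.card : ℚ) * r / (n.descFactorial k) =
        r / (n.descFactorial k) * A.card := by ring
    rw [this]
    exact hIJ
end

section
/- Let c₀ > c ≥ 1 and let A ⊆ S_n satisfy |A|/n! ≥ 1/cⁿ. Then there exists m ≥ (1 − log_{c₀}(c))·n with m ≡ n (mod 2) and a set B ⊆ S_m such that: B is (k, c₀^k)-pseudorandom for every even k ∈ [m]; the number of pairs in B differing by a single cycle is at most the number of pairs in A differing by a single cycle; |B|/m! ≥ |A|/n!; and if all permutations of A have the same sign then all permutations of B have the same sign. -/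
/-! If `B ⊆ S_m` is not `(k, c₀^k)`-pseudorandom, some fibre `{π ∈ B : π ∘ J = I}` carries more
than a `c₀^k / (m)_k` share of `B`. Translating it by a permutation `σ` with `σ ∘ J = I` lands it
among the permutations fixing `range J`, a copy of `S_{m-k}`, so its density there is at least
`c₀^k` times that of `B`; translation and restriction preserve single-cycle differences and
constancy of the sign. Iterating over even `k` keeps the parity of `m`, and since densities never
exceed `1`, the accumulated factor `c₀^(n-m)` is at most `c^n`, i.e. `n - m ≤ n log_{c₀} c`. -/

open Equiv Finset

/-- `A ⊆ S_n` is `(k, r)`-pseudorandom (real-valued version). -/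
def PseudorandomR (n : ℕ) (A : Finset (Equiv.Perm (Fin n))) (k : ℕ) (r : ℝ) : Prop :=
  ∀ I J : Fin k ↪ Fin n,
    ((A.filter fun π => ∀ j, π (J j) = I j).card : ℝ) / A.card < r / (n.descFactorial k)

open scoped Classical in
/-- The number of (ordered) pairs of elements of `A` differing by a single cycle,
i.e. edges of the Birkhoff graph inside `A`. -/
noncomputable def edgePairs (m : ℕ) (A : Finset (Equiv.Perm (Fin m))) : ℕ :=
  ((A ×ˢ A).filter fun p => (p.1 * p.2⁻¹).IsCycle).card

lemma edgePairs_le_of_injOn {a b : ℕ} {A : Finset (Perm (Fin a))} {B : Finset (Perm (Fin b))}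
    (φ : Perm (Fin a) → Perm (Fin b)) (hmaps : Set.MapsTo φ A B) (hinj : Set.InjOn φ A)
    (hcycle : ∀ x ∈ A, ∀ y ∈ A, (x * y⁻¹).IsCycle → (φ x * (φ y)⁻¹).IsCycle) :
    edgePairs a A ≤ edgePairs b B := by
  refine card_le_card_of_injOn (Prod.map φ φ) ?_ ?_
  · rintro ⟨x, y⟩ h
    simp only [coe_filter, mem_product, Set.mem_ofPred_eq] at h ⊢
    exact ⟨⟨hmaps h.1.1, hmaps h.1.2⟩, hcycle x h.1.1 y h.1.2 h.2⟩
  · rintro ⟨x, y⟩ h ⟨x', y'⟩ h' hxy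
    simp only [coe_filter, mem_product, Set.mem_ofPred_eq] at h h'
    simp only [Prod.map, Prod.mk.injEq] at hxy ⊢
    exact ⟨hinj h.1.1 h'.1.1 hxy.1, hinj h.1.2 h'.1.2 hxy.2⟩

lemma Equiv.Perm.exists_extendDomain_eq {α β : Type*} {p : β → Prop} [DecidablePred p]
    (f : α ≃ Subtype p) {g : Perm β} (hg : ∀ x, ¬p x → g x = x) :
    ∃ ρ : Perm α, ρ.extendDomain f = g := by
  have hp : ∀ x, p (g x) ↔ p x := fun x => by
    by_cases hx : p x
    · refine iff_of_true (by_contra fun hgx => hgx ?_) hx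
      rwa [g.injective (hg _ hgx)]
    · rw [hg x hx]
  refine ⟨f.symm.permCongr (g.subtypePerm hp), Equiv.ext fun x => ?_⟩
  by_cases hx : p x
  · simp [Perm.extendDomain_apply_subtype _ f hx]
  · rw [Perm.extendDomain_apply_not_subtype _ f hx, hg x hx]

lemma exists_perm_fin_sub_of_fiber {m k : ℕ} (B : Finset (Perm (Fin m))) (I J : Fin k ↪ Fin m) :
    ∃ C : Finset (Perm (Fin (m - k))),
      #(B.filter fun π => ∀ j, π (J j) = I j) ≤ #C ∧
      edgePairs (m - k) C ≤ edgePairs m B ∧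
      ((∀ π ∈ B, ∀ π' ∈ B, Perm.sign π = Perm.sign π') →
        ∀ τ ∈ C, ∀ τ' ∈ C, Perm.sign τ = Perm.sign τ') := by
  classical
  obtain ⟨σ, hσ⟩ := Perm.exists_extending_pair J I J.injective I.injective
  have hcard : Fintype.card {x // x ∉ Set.range J} = m - k := by
    rw [Fintype.card_subtype_compl, Fintype.card_fin, Set.card_range_of_injective J.injective,
      Fintype.card_fin]
  let f : Fin (m - k) ≃ {x // x ∉ Set.range J} := (Fintype.equivFinOfCardEq hcard).symm
  -- `ψ` identifies `S_{m-k}` with the coset of permutations sending `J` to `I`.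
  let ψ : Perm (Fin (m - k)) → Perm (Fin m) := fun ρ => σ * ρ.extendDomain f
  have hψ_inj : Function.Injective ψ := fun ρ ρ' h =>
    Perm.extendDomainHom_injective f (mul_left_cancel h)
  refine ⟨univ.filter (ψ · ∈ B), ?_, ?_, ?_⟩
  · refine card_le_card_of_surjOn ψ fun π hπ => ?_
    simp only [coe_filter, Set.mem_ofPred_eq] at hπ
    obtain ⟨ρ, hρ⟩ := Perm.exists_extendDomain_eq f (g := σ⁻¹ * π) fun x hx => by
      obtain ⟨j, rfl⟩ := not_not.mp hx
      rw [Perm.mul_apply, hπ.2, ← hσ]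
      exact σ.symm_apply_apply _
    refine ⟨ρ, ?_, ?_⟩ <;> simp [ψ, hρ, hπ.1]
  · refine edgePairs_le_of_injOn ψ (fun ρ hρ => (mem_filter.mp hρ).2) hψ_inj.injOn
      fun x _ y _ hxy => ?_
    have : ψ x * (ψ y)⁻¹ = σ * (x * y⁻¹).extendDomain f * σ⁻¹ := by
      rw [← Perm.extendDomain_mul, ← Perm.extendDomain_inv]
      simp only [ψ, mul_inv_rev, mul_assoc]
    rw [this]
    exact (hxy.extendDomain f).conj
  · intro hB ρ hρ ρ' hρ'
    have := hB _ (mem_filter.mp hρ).2 _ (mem_filter.mp hρ').2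
    simpa [ψ, Perm.sign_mul, Perm.sign_extendDomain] using this

lemma exists_density_increment {m k : ℕ} {r : ℝ} {B : Finset (Perm (Fin m))} (hkm : k ≤ m)
    (hB : ¬PseudorandomR m B k r) :
    ∃ C : Finset (Perm (Fin (m - k))),
      r * (#B / m.factorial : ℝ) ≤ #C / (m - k).factorial ∧
      edgePairs (m - k) C ≤ edgePairs m B ∧
      ((∀ π ∈ B, ∀ π' ∈ B, Perm.sign π = Perm.sign π') →
        ∀ τ ∈ C, ∀ τ' ∈ C, Perm.sign τ = Perm.sign τ') := by
  simp only [PseudorandomR, not_forall, not_lt] at hB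
  obtain ⟨I, J, hIJ⟩ := hB
  obtain ⟨C, hFC, hedge, hsign⟩ := exists_perm_fin_sub_of_fiber B I J
  set F := B.filter fun π => ∀ j, π (J j) = I j
  have hF : (#F : ℝ) / #B * #B = #F := div_mul_cancel_of_imp fun h => by
    rw [Nat.cast_eq_zero, card_eq_zero] at h
    simp [F, h]
  have hfac : (m.factorial : ℝ) = (m - k).factorial * m.descFactorial k := by
    exact_mod_cast (Nat.factorial_mul_descFactorial hkm).symm
  refine ⟨C, ?_, hedge, hsign⟩
  calc r * (#B / m.factorial : ℝ) = r / m.descFactorial k * #B / (m - k).factorial := by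
        rw [hfac]; ring
    _ ≤ #F / #B * #B / (m - k).factorial := by gcongr
    _ ≤ #C / (m - k).factorial := by rw [hF]; gcongr

lemma exists_pseudorandom_of_density_increment {c₀ : ℝ} (hc₀ : 0 ≤ c₀) (m : ℕ)
    (B : Finset (Perm (Fin m))) :
    ∃ m' ≤ m, m' % 2 = m % 2 ∧ ∃ C : Finset (Perm (Fin m')),
      (∀ k ∈ Icc 1 m', Even k → PseudorandomR m' C k (c₀ ^ k)) ∧
      edgePairs m' C ≤ edgePairs m B ∧
      c₀ ^ (m - m') * (#B / m.factorial : ℝ) ≤ #C / m'.factorial ∧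
      ((∀ π ∈ B, ∀ π' ∈ B, Perm.sign π = Perm.sign π') →
        ∀ τ ∈ C, ∀ τ' ∈ C, Perm.sign τ = Perm.sign τ') := by
  induction m using Nat.strong_induction_on with
  | _ m ih =>
    by_cases hB : ∀ k ∈ Icc 1 m, Even k → PseudorandomR m B k (c₀ ^ k)
    · exact ⟨m, le_rfl, rfl, B, hB, le_rfl, by simp, id⟩
    push Not at hB
    obtain ⟨k, hk, ⟨j, rfl⟩, hBk⟩ := hB
    rw [mem_Icc] at hk
    obtain ⟨C', hdens', hedge', hsign'⟩ := exists_density_increment hk.2 hBk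
    obtain ⟨m', hm', hpar, C, hC, hedge, hdens, hsign⟩ := ih (m - (j + j)) (by omega) C'
    refine ⟨m', by omega, by omega, C, hC, hedge.trans hedge', ?_, hsign ∘ hsign'⟩
    have hpow : c₀ ^ (m - m') = c₀ ^ (m - (j + j) - m') * c₀ ^ (j + j) := by
      rw [← pow_add]; congr 1; omega
    calc c₀ ^ (m - m') * (#B / m.factorial : ℝ)
        = c₀ ^ (m - (j + j) - m') * (c₀ ^ (j + j) * (#B / m.factorial)) := by
          rw [hpow, mul_assoc]
      _ ≤ c₀ ^ (m - (j + j) - m') * (#C' / (m - (j + j)).factorial) := by gcongr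
      _ ≤ #C / m'.factorial := hdens

lemma card_div_factorial_le_one {m : ℕ} (B : Finset (Perm (Fin m))) :
    (#B / m.factorial : ℝ) ≤ 1 := by
  rw [div_le_one (by positivity)]
  exact_mod_cast (card_le_univ B).trans_eq (by simp [Fintype.card_perm])

lemma Real.natCast_le_mul_logb_of_pow_le_pow {b c : ℝ} (hb : 1 < b) {k n : ℕ}
    (h : b ^ k ≤ c ^ n) : (k : ℝ) ≤ n * Real.logb b c := by
  have := Real.logb_le_logb_of_le hb (by positivity) h
  rwa [Real.logb_pow, Real.logb_pow, Real.logb_self_eq_one hb, mul_one] at this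

/-- density increment. -/
theorem stmt12 (c₀ c : ℝ) (hc : 1 ≤ c) (hcc : c < c₀) (n : ℕ)
    (A : Finset (Equiv.Perm (Fin n)))
    (hA : 1 / c ^ n ≤ (A.card : ℝ) / n.factorial) :
    ∃ m : ℕ, (1 - Real.logb c₀ c) * n ≤ (m : ℝ) ∧ m % 2 = n % 2 ∧
      ∃ B : Finset (Equiv.Perm (Fin m)),
        (∀ k ∈ Finset.Icc 1 m, Even k → PseudorandomR m B k (c₀ ^ k)) ∧
        edgePairs m B ≤ edgePairs n A ∧
        (A.card : ℝ) / n.factorial ≤ (B.card : ℝ) / m.factorial ∧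
        ((∀ π ∈ A, ∀ π' ∈ A, Equiv.Perm.sign π = Equiv.Perm.sign π') →
          ∀ τ ∈ B, ∀ τ' ∈ B, Equiv.Perm.sign τ = Equiv.Perm.sign τ') := by
  have hc₀ : 1 < c₀ := hc.trans_lt hcc
  obtain ⟨m, hmn, hpar, B, hB, hedge, hdens, hsign⟩ :=
    exists_pseudorandom_of_density_increment (zero_le_one.trans hc₀.le) n A
  have hdensA : 0 ≤ (#A / n.factorial : ℝ) := by positivity
  refine ⟨m, ?_, hpar, B, hB, hedge,
    (le_mul_of_one_le_left hdensA (one_le_pow₀ hc₀.le)).trans hdens, hsign⟩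
  have hpow : c₀ ^ (n - m) ≤ c ^ n := by
    have : c₀ ^ (n - m) * (1 / c ^ n) ≤ 1 := calc
      c₀ ^ (n - m) * (1 / c ^ n) ≤ c₀ ^ (n - m) * (#A / n.factorial) := by gcongr
      _ ≤ 1 := hdens.trans (card_div_factorial_le_one B)
    rwa [mul_one_div, div_le_one (by positivity)] at this
  have hlog := Real.natCast_le_mul_logb_of_pow_le_pow hc₀ hpow
  rw [Nat.cast_sub hmn] at hlog
  linarith
end

section
/- Let n ≥ 2 and suppose A is an independent set in the Birkhoff graph B_{⌈n/2⌉}. Then A' := {(σ, (σ')⁻¹τ) : σ ∈ S_{⌊n/2⌋}, τ ∈ A} is an independent set in B_n, where σ' is the extension of σ to [⌈n/2⌉] fixing ⌈n/2⌉ when n is odd, and S_{⌊n/2⌋} × S_{⌈n/2⌉} is included naturally in S_n. In particular |A'| = ⌊n/2⌋! · |A|. -/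
open Equiv Finset

/-- `A` is an independent set of the Birkhoff graph `B_m`: no two of its elements differ
by a single cycle. -/
def IsIndep {m : ℕ} (A : Finset (Equiv.Perm (Fin m))) : Prop :=
  ∀ σ ∈ A, ∀ τ ∈ A, ¬ (σ * τ⁻¹).IsCycle

/-- The natural inclusion of `S_{⌊n/2⌋} × S_{⌈n/2⌉}` in `S_n`. -/
noncomputable def emb (n : ℕ) :
    Equiv.Perm (Fin (n / 2)) × Equiv.Perm (Fin (n - n / 2)) → Equiv.Perm (Fin n) :=
  fun st => (Equiv.permCongr (finSumFinEquiv.trans (finCongr (by omega))))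
    (Equiv.sumCongr st.1 st.2)

/-- The natural extension of `σ ∈ S_{⌊n/2⌋}` to `S_{⌈n/2⌉}` (fixing the possibly extra
point). -/
noncomputable def extPerm (n : ℕ) (σ : Equiv.Perm (Fin (n / 2))) :
    Equiv.Perm (Fin (n - n / 2)) :=
  σ.viaFintypeEmbedding (Fin.castLEEmb (by omega))

/-!
A cycle of the Young subgroup `S_{⌊n/2⌋} × S_{⌈n/2⌉}` is a cycle in one factor and the identity
in the other. For two elements of `A'` the quotient is `(σ₁ σ₂⁻¹, σ₁'⁻¹ τ₁ τ₂⁻¹ σ₂')`. If it is a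
cycle in the first factor, the second component is trivial and `τ₁ τ₂⁻¹ = (σ₁ σ₂⁻¹)'` is the
extension of a cycle; if in the second factor, then `σ₁ = σ₂` and `τ₁ τ₂⁻¹` is conjugate to a
cycle. Either way `A` would not be independent. The count holds because
`(σ, τ) ↦ (σ, σ'⁻¹ τ)` is injective.
-/

namespace Equiv.Perm

variable {α β : Type*}

theorem IsCycle.permCongr {g : Perm α} (hg : g.IsCycle) (e : α ≃ β) :
    (e.permCongr g).IsCycle := by
  have : e.permCongr g = g.extendDomain (e.trans (subtypeUnivEquiv fun _ => trivial).symm) := by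
    ext x; simp [Equiv.permCongr_apply, extendDomain_apply_subtype]
  exact this ▸ hg.extendDomain _

theorem isCycle_permCongr_iff {g : Perm α} (e : α ≃ β) :
    (e.permCongr g).IsCycle ↔ g.IsCycle := by
  refine ⟨fun h => ?_, (·.permCongr e)⟩
  have := h.permCongr e.symm
  rwa [← Equiv.permCongr_symm, Equiv.symm_apply_apply] at this

theorem sumCongr_zpow (p : Perm α) (q : Perm β) (k : ℤ) :
    sumCongr p q ^ k = sumCongr (p ^ k) (q ^ k) :=
  (map_zpow (sumCongrHom α β) (p, q) k).symm

variable {p : Perm α} {q : Perm β}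

theorem sameCycle_sumCongr_inl {a b : α} :
    SameCycle (sumCongr p q) (.inl a) (.inl b) ↔ SameCycle p a b := by
  simp [SameCycle, sumCongr_zpow]

theorem sameCycle_sumCongr_inr {a b : β} :
    SameCycle (sumCongr p q) (.inr a) (.inr b) ↔ SameCycle q a b := by
  simp [SameCycle, sumCongr_zpow]

theorem not_sameCycle_sumCongr_inl_inr {a : α} {b : β} :
    ¬ SameCycle (sumCongr p q) (.inl a) (.inr b) := by
  simp [SameCycle, sumCongr_zpow]

theorem IsCycle.of_sumCongr (h : (sumCongr p q).IsCycle) :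
    (p.IsCycle ∧ q = 1) ∨ (p = 1 ∧ q.IsCycle) := by
  obtain ⟨x, hx, hsc⟩ := h
  rcases x with a | b
  · refine .inl ⟨⟨a, by simpa using hx, fun b hb => ?_⟩, ?_⟩
    · exact sameCycle_sumCongr_inl.1 (hsc (by simpa using hb))
    · ext b
      by_contra hb
      exact not_sameCycle_sumCongr_inl_inr (hsc (y := .inr b) (by simpa using hb))
  · refine .inr ⟨?_, ⟨b, by simpa using hx, fun a ha => ?_⟩⟩
    · ext a
      by_contra ha
      exact not_sameCycle_sumCongr_inl_inr (hsc (y := .inl a) (by simpa using ha)).symm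
    · exact sameCycle_sumCongr_inr.1 (hsc (by simpa using ha))

end Equiv.Perm

section Halves

open Perm

variable (n : ℕ)

theorem emb_mul (x y : Perm (Fin (n / 2)) × Perm (Fin (n - n / 2))) :
    emb n (x * y) = emb n x * emb n y := by
  simp only [emb, Prod.fst_mul, Prod.snd_mul, ← sumCongr_mul, Equiv.permCongr_mul]

theorem emb_inv (x : Perm (Fin (n / 2)) × Perm (Fin (n - n / 2))) :
    emb n x⁻¹ = (emb n x)⁻¹ := by
  simp only [emb, Prod.fst_inv, Prod.snd_inv, ← sumCongr_inv]
  exact map_inv (permCongrHom _) (Equiv.sumCongr x.1 x.2)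

theorem emb_injective : Function.Injective (emb n) :=
  fun _ _ h => sumCongrHom_injective ((Equiv.permCongr _).injective h)

theorem Equiv.Perm.IsCycle.of_emb {x : Perm (Fin (n / 2)) × Perm (Fin (n - n / 2))}
    (h : (emb n x).IsCycle) : (x.1.IsCycle ∧ x.2 = 1) ∨ (x.1 = 1 ∧ x.2.IsCycle) :=
  ((isCycle_permCongr_iff _).1 h).of_sumCongr

theorem extPerm_mul (σ τ : Perm (Fin (n / 2))) :
    extPerm n (σ * τ) = extPerm n σ * extPerm n τ :=
  (extendDomain_mul _ _ _).symm

theorem extPerm_inv (σ : Perm (Fin (n / 2))) : extPerm n σ⁻¹ = (extPerm n σ)⁻¹ :=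
  (extendDomain_inv _ _).symm

theorem Equiv.Perm.IsCycle.extPerm {σ : Perm (Fin (n / 2))} (h : σ.IsCycle) :
    (extPerm n σ).IsCycle :=
  h.extendDomain _

noncomputable def shearEmb (st : Perm (Fin (n / 2)) × Perm (Fin (n - n / 2))) :
    Perm (Fin n) :=
  emb n (st.1, (extPerm n st.1)⁻¹ * st.2)

theorem shearEmb_mul_inv (x y : Perm (Fin (n / 2)) × Perm (Fin (n - n / 2))) :
    shearEmb n x * (shearEmb n y)⁻¹ =
      emb n (x.1 * y.1⁻¹, (extPerm n x.1)⁻¹ * (x.2 * y.2⁻¹) * extPerm n y.1) := by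
  rw [shearEmb, shearEmb, ← emb_inv, ← emb_mul]
  simp only [Prod.inv_mk, Prod.mk_mul_mk, mul_inv_rev, inv_inv, mul_assoc]

theorem shearEmb_injective : Function.Injective (shearEmb n) := by
  rintro ⟨σ₁, τ₁⟩ ⟨σ₂, τ₂⟩ h
  obtain ⟨rfl, h⟩ := Prod.ext_iff.1 (emb_injective n h)
  simpa using h

variable {n}

theorem isIndep_image_shearEmb {A : Finset (Perm (Fin (n - n / 2)))} (hA : IsIndep A) :
    IsIndep ((univ ×ˢ A).image (shearEmb n)) := by
  simp only [IsIndep, mem_image, mem_product, mem_univ, true_and, Prod.exists]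
  rintro _ ⟨σ₁, τ₁, hτ₁, rfl⟩ _ ⟨σ₂, τ₂, hτ₂, rfl⟩ (hcyc : IsCycle _)
  rw [shearEmb_mul_inv] at hcyc
  refine hA τ₁ hτ₁ τ₂ hτ₂ ?_
  rcases hcyc.of_emb with ⟨hσ, hτ⟩ | ⟨hσ, hτ⟩ <;> dsimp only at hσ hτ
  · have : τ₁ * τ₂⁻¹ = extPerm n (σ₁ * σ₂⁻¹) := by
      rw [extPerm_mul, extPerm_inv]
      exact inv_mul_eq_iff_eq_mul.1 (mul_eq_one_iff_eq_inv.1 hτ)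
    exact this ▸ hσ.extPerm n
  · obtain rfl := mul_inv_eq_one.1 hσ
    simpa [mul_assoc] using hτ.conj (g := extPerm n σ₁)

end Halves

theorem stmt13_general (n : ℕ) (A : Finset (Equiv.Perm (Fin (n - n / 2))))
    (hA : IsIndep A) :
    IsIndep ((Finset.univ ×ˢ A).image fun st => emb n (st.1, (extPerm n st.1)⁻¹ * st.2)) ∧
    ((Finset.univ ×ˢ A).image fun st => emb n (st.1, (extPerm n st.1)⁻¹ * st.2)).card
      = (n / 2).factorial * A.card := by
  refine ⟨isIndep_image_shearEmb hA, (card_image_of_injective _ (shearEmb_injective n)).trans ?_⟩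
  rw [card_product, card_univ, Fintype.card_perm, Fintype.card_fin]

/-- from an independent set `A` of `B_{⌈n/2⌉}`, the set
`A' = {(σ, (σ')⁻¹ τ) : σ ∈ S_{⌊n/2⌋}, τ ∈ A}` is independent in `B_n` and has
cardinality `⌊n/2⌋! · |A|`. -/
theorem stmt13 (n : ℕ) (hn : 2 ≤ n) (A : Finset (Equiv.Perm (Fin (n - n / 2))))
    (hA : IsIndep A) :
    IsIndep ((Finset.univ ×ˢ A).image fun st => emb n (st.1, (extPerm n st.1)⁻¹ * st.2)) ∧
    ((Finset.univ ×ˢ A).image fun st => emb n (st.1, (extPerm n st.1)⁻¹ * st.2)).card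
      = (n / 2).factorial * A.card :=
  stmt13_general n A hA
end

section
/- Let n ≥ 2 and suppose f : S_{⌈n/2⌉} → X is a proper coloring of the Birkhoff graph B_{⌈n/2⌉}. Then B_n admits a proper coloring with binom(n, ⌈n/2⌉) · |X| colors. -/
open Equiv Finset

namespace Stmt16Aux

def presH (n m : ℕ) : Subgroup (Equiv.Perm (Fin n)) where
  carrier := {h | ∀ x : Fin n, ((h x : ℕ) < m ↔ (x : ℕ) < m)}
  one_mem' := fun x => by simp
  mul_mem' := by
    intro a b ha hb x
    simpa [Equiv.Perm.mul_apply] using (ha (b x)).trans (hb x)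
  inv_mem' := by
    intro a ha x
    simpa using (ha (a⁻¹ x)).symm

lemma mem_presH {n m : ℕ} {a : Equiv.Perm (Fin n)} :
    a ∈ presH n m ↔ ∀ x : Fin n, ((a x : ℕ) < m ↔ (x : ℕ) < m) := Iff.rfl

def psiFun (n m : ℕ) (h2m : n ≤ 2 * m) (g : Equiv.Perm (Fin n))
    (hg : g ∈ presH n m) : Fin m → Fin m := fun j =>
  if hj : (j : ℕ) + m < n then
    ⟨(g ⟨(j : ℕ) + m, hj⟩ : ℕ) - m, by
      have h1 := hg ⟨(j : ℕ) + m, hj⟩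
      have h2 : (g ⟨(j : ℕ) + m, hj⟩ : ℕ) < n := (g _).2
      simp only [Fin.val_mk] at h1
      omega⟩
  else j

lemma psiFun_congr (n m : ℕ) (h2m : n ≤ 2 * m) {g g' : Equiv.Perm (Fin n)}
    (hgg : g = g') (hg : g ∈ presH n m) (hg' : g' ∈ presH n m) (j : Fin m) :
    psiFun n m h2m g hg j = psiFun n m h2m g' hg' j := by subst hgg; rfl

lemma psiFun_one (n m : ℕ) (h2m : n ≤ 2 * m) (hg : (1 : Equiv.Perm (Fin n)) ∈ presH n m)
    (j : Fin m) : psiFun n m h2m 1 hg j = j := by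
  rw [psiFun]
  split
  · exact Fin.ext (by simp)
  · rfl

lemma psiFun_comp (n m : ℕ) (h2m : n ≤ 2 * m) (a b : Equiv.Perm (Fin n))
    (ha : a ∈ presH n m) (hb : b ∈ presH n m) (j : Fin m) :
    psiFun n m h2m a ha (psiFun n m h2m b hb j) = psiFun n m h2m (a * b) (mul_mem ha hb) j := by
  by_cases hj : (j : ℕ) + m < n
  · have hge : m ≤ (b ⟨(j : ℕ) + m, hj⟩ : ℕ) := by
      have := hb ⟨(j : ℕ) + m, hj⟩; simp only [Fin.val_mk] at this; omega
    have hlt : (b ⟨(j : ℕ) + m, hj⟩ : ℕ) < n := (b _).2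
    have hc : ((b ⟨(j : ℕ) + m, hj⟩ : ℕ) - m) + m < n := by omega
    have e1 : psiFun n m h2m b hb j = ⟨(b ⟨(j : ℕ) + m, hj⟩ : ℕ) - m, by omega⟩ := by
      rw [psiFun, dif_pos hj]
    have e2 : psiFun n m h2m (a * b) (mul_mem ha hb) j
        = ⟨((a * b) ⟨(j : ℕ) + m, hj⟩ : ℕ) - m, by
            have h1 := (mul_mem ha hb : a * b ∈ presH n m) ⟨(j : ℕ) + m, hj⟩
            have h2 : ((a * b) ⟨(j : ℕ) + m, hj⟩ : ℕ) < n := ((a * b) _).2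
            simp only [Fin.val_mk] at h1
            omega⟩ := by
      rw [psiFun, dif_pos hj]
    rw [e1, e2, psiFun, dif_pos hc]
    apply Fin.ext
    simp only [Fin.val_mk, Equiv.Perm.mul_apply]
    have harg : (⟨((⟨(b ⟨(j : ℕ) + m, hj⟩ : ℕ) - m, by omega⟩ : Fin m) : ℕ) + m, hc⟩ : Fin n)
        = b ⟨(j : ℕ) + m, hj⟩ := Fin.ext (by simp only [Fin.val_mk]; omega)
    rw [harg]
  · have e1 : psiFun n m h2m b hb j = j := by rw [psiFun, dif_neg hj]
    rw [e1, psiFun, dif_neg hj, psiFun, dif_neg hj]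

def psi (n m : ℕ) (h2m : n ≤ 2 * m) : presH n m →* Equiv.Perm (Fin m) where
  toFun h :=
    { toFun := psiFun n m h2m h.1 h.2
      invFun := psiFun n m h2m h.1⁻¹ (inv_mem h.2)
      left_inv := fun j => by
        refine (psiFun_comp n m h2m _ _ (inv_mem h.2) h.2 j).trans ?_
        exact (psiFun_congr n m h2m (inv_mul_cancel h.1) _ (one_mem _) j).trans
          (psiFun_one n m h2m _ j)
      right_inv := fun j => by
        refine (psiFun_comp n m h2m _ _ h.2 (inv_mem h.2) j).trans ?_
        exact (psiFun_congr n m h2m (mul_inv_cancel h.1) _ (one_mem _) j).trans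
          (psiFun_one n m h2m _ j) }
  map_one' := by
    ext j
    exact congrArg Fin.val ((psiFun_congr n m h2m (OneMemClass.coe_one _) (1 : presH n m).2
      (one_mem _) j).trans (psiFun_one n m h2m (one_mem _) j))
  map_mul' := by
    intro a b
    ext j
    exact congrArg Fin.val (psiFun_comp n m h2m a.1 b.1 a.2 b.2 j).symm

def phi (n m : ℕ) (hmn : m ≤ n) : presH n m →* Equiv.Perm (Fin m) where
  toFun h :=
    { toFun := fun i => ⟨(h.1 ⟨i, i.2.trans_le hmn⟩ : ℕ), (h.2 _).mpr i.2⟩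
      invFun := fun i => ⟨(h.1⁻¹ ⟨i, i.2.trans_le hmn⟩ : ℕ), ((inv_mem h.2) _).mpr i.2⟩
      left_inv := fun i => by apply Fin.ext; simp
      right_inv := fun i => by apply Fin.ext; simp }
  map_one' := by ext i; simp
  map_mul' := by intro a b; ext i; simp [Equiv.Perm.mul_apply]

lemma psi_apply (n m : ℕ) (h2m : n ≤ 2 * m) (u : presH n m) (j : Fin m)
    (hj : (j : ℕ) + m < n) :
    ((psi n m h2m u) j : ℕ) = (u.1 ⟨(j : ℕ) + m, hj⟩ : ℕ) - m := by
  show (psiFun n m h2m u.1 u.2 j : ℕ) = _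
  rw [psiFun, dif_pos hj]

lemma psi_apply_of_ge (n m : ℕ) (h2m : n ≤ 2 * m) (u : presH n m) (j : Fin m)
    (hj : ¬ ((j : ℕ) + m < n)) : (psi n m h2m u) j = j := by
  show psiFun n m h2m u.1 u.2 j = j
  rw [psiFun, dif_neg hj]

lemma supp_cases (n m : ℕ) (u : presH n m) (hu : u.1.IsCycle) :
    (∀ x : Fin n, u.1 x ≠ x → (x : ℕ) < m) ∨ (∀ x : Fin n, u.1 x ≠ x → ¬ (x : ℕ) < m) := by
  obtain ⟨a, ha, hall⟩ := hu
  have key : ∀ x : Fin n, u.1 x ≠ x → ((x : ℕ) < m ↔ (a : ℕ) < m) := by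
    intro x hx
    obtain ⟨j, hj⟩ := hall hx
    have hz : u.1 ^ j ∈ presH n m := zpow_mem u.2 j
    rw [← hj]
    exact hz a
  by_cases hm : (a : ℕ) < m
  · left; intro x hx; exact (key x hx).mpr hm
  · right; intro x hx h'; exact hm ((key x hx).mp h')

lemma isCycle_phi (n m : ℕ) (hmn : m ≤ n) (u : presH n m) (hu : u.1.IsCycle)
    (hs : ∀ x : Fin n, u.1 x ≠ x → (x : ℕ) < m) : (phi n m hmn u).IsCycle := by
  obtain ⟨a, ha, hall⟩ := hu
  have ham : (a : ℕ) < m := hs a ha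
  have hea : (⟨(a : ℕ), ham.trans_le hmn⟩ : Fin n) = a := Fin.ext rfl
  refine ⟨⟨(a : ℕ), ham⟩, ?_, ?_⟩
  · intro hcon
    apply ha
    apply Fin.ext
    have hv : (((phi n m hmn u) ⟨(a : ℕ), ham⟩ : Fin m) : ℕ) = ((⟨(a : ℕ), ham⟩ : Fin m) : ℕ) :=
      congrArg Fin.val hcon
    calc (u.1 a : ℕ) = (u.1 ⟨(a : ℕ), ham.trans_le hmn⟩ : ℕ) := by rw [hea]
      _ = (a : ℕ) := hv
  · intro y hy
    have hyn : (y : ℕ) < n := y.2.trans_le hmn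
    have hmove : u.1 ⟨(y : ℕ), hyn⟩ ≠ ⟨(y : ℕ), hyn⟩ := by
      intro he
      apply hy
      apply Fin.ext
      show (u.1 ⟨(y : ℕ), hyn⟩ : ℕ) = ((⟨(y : ℕ), hyn⟩ : Fin n) : ℕ)
      exact congrArg Fin.val he
    obtain ⟨j, hj⟩ := hall hmove
    refine ⟨j, ?_⟩
    rw [← map_zpow]
    apply Fin.ext
    show ((u ^ j).1 ⟨(a : ℕ), ham.trans_le hmn⟩ : ℕ) = (y : ℕ)
    rw [SubgroupClass.coe_zpow, hea, hj]

lemma isCycle_psi (n m : ℕ) (h2m : n ≤ 2 * m) (u : presH n m) (hu : u.1.IsCycle)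
    (hs : ∀ x : Fin n, u.1 x ≠ x → ¬ (x : ℕ) < m) : (psi n m h2m u).IsCycle := by
  obtain ⟨a, ha, hall⟩ := hu
  have ham : ¬ (a : ℕ) < m := hs a ha
  have han : (a : ℕ) < n := a.2
  have hj0m : (a : ℕ) - m < m := by omega
  have hj0 : (((⟨(a : ℕ) - m, hj0m⟩ : Fin m) : ℕ)) + m < n := by
    simp only [Fin.val_mk]; omega
  have hj0a : (⟨((⟨(a : ℕ) - m, hj0m⟩ : Fin m) : ℕ) + m, hj0⟩ : Fin n) = a :=
    Fin.ext (by simp only [Fin.val_mk]; omega)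
  have huam : ¬ (u.1 a : ℕ) < m := by rw [u.2 a]; exact ham
  refine ⟨⟨(a : ℕ) - m, hj0m⟩, ?_, ?_⟩
  · intro hcon
    apply ha
    apply Fin.ext
    have := congrArg Fin.val hcon
    rw [psi_apply n m h2m u _ hj0, hj0a] at this
    simp only [Fin.val_mk] at this
    omega
  · intro y hy
    have hyj : (y : ℕ) + m < n := by
      by_contra hc
      exact hy (psi_apply_of_ge n m h2m u y hc)
    have huym : ¬ (u.1 ⟨(y : ℕ) + m, hyj⟩ : ℕ) < m := by
      rw [u.2]; simp only [Fin.val_mk]; omega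
    have hymoved : u.1 ⟨(y : ℕ) + m, hyj⟩ ≠ ⟨(y : ℕ) + m, hyj⟩ := by
      intro he
      apply hy
      apply Fin.ext
      rw [psi_apply n m h2m u y hyj, he]
      simp only [Fin.val_mk]
      omega
    obtain ⟨j, hj⟩ := hall hymoved
    refine ⟨j, ?_⟩
    rw [← map_zpow]
    apply Fin.ext
    rw [psi_apply n m h2m (u ^ j) _ hj0]
    rw [SubgroupClass.coe_zpow, hj0a, hj]
    simp only [Fin.val_mk]
    omega

lemma phi_eq_one (n m : ℕ) (hmn : m ≤ n) (u : presH n m)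
    (hs : ∀ x : Fin n, u.1 x ≠ x → ¬ (x : ℕ) < m) : phi n m hmn u = 1 := by
  ext i
  have : u.1 ⟨(i : ℕ), i.2.trans_le hmn⟩ = ⟨(i : ℕ), i.2.trans_le hmn⟩ := by
    by_contra hne
    exact (hs _ hne) (by simp only [Fin.val_mk]; exact i.2)
  show (u.1 ⟨(i : ℕ), i.2.trans_le hmn⟩ : ℕ) = ((⟨(i : ℕ), i.2.trans_le hmn⟩ : Fin n) : ℕ)
  exact congrArg Fin.val this

lemma psi_eq_one (n m : ℕ) (h2m : n ≤ 2 * m) (u : presH n m)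
    (hs : ∀ x : Fin n, u.1 x ≠ x → (x : ℕ) < m) : psi n m h2m u = 1 := by
  ext j
  by_cases hj : (j : ℕ) + m < n
  · have hfix : u.1 ⟨(j : ℕ) + m, hj⟩ = ⟨(j : ℕ) + m, hj⟩ := by
      by_contra hne
      have := hs _ hne
      simp only [Fin.val_mk] at this
      omega
    have h2 := psi_apply n m h2m u j hj
    rw [hfix] at h2
    have hr : ((1 : Equiv.Perm (Fin m)) j : ℕ) = (j : ℕ) := rfl
    have hc : ((⟨(j : ℕ) + m, hj⟩ : Fin n) : ℕ) = (j : ℕ) + m := rfl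
    exact h2.trans (by omega)
  · exact congrArg Fin.val (psi_apply_of_ge n m h2m u j hj)


end Stmt16Aux

lemma card_filter (n m : ℕ) (hmn : m ≤ n) (σ : Equiv.Perm (Fin n)) :
    (univ.filter fun x : Fin n => ((σ x : ℕ) < m)).card = m := by
  have h1 : (univ.filter fun x : Fin n => ((σ x : ℕ) < m))
      = (univ.filter fun y : Fin n => ((y : ℕ) < m)).map σ.symm.toEmbedding := by
    ext x
    simp only [Finset.mem_filter, Finset.mem_univ, true_and, Finset.mem_map,
      Equiv.coe_toEmbedding]
    constructor
    · intro hx; exact ⟨σ x, hx, by simp⟩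
    · rintro ⟨y, hy, rfl⟩; simpa using hy
  have h2 : (univ.filter fun y : Fin n => ((y : ℕ) < m))
      = (univ : Finset (Fin m)).map (Fin.castLEEmb hmn) := by
    ext y
    simp only [Finset.mem_filter, Finset.mem_univ, true_and, Finset.mem_map,
      Fin.castLEEmb_apply]
    constructor
    · intro hy; exact ⟨⟨(y : ℕ), hy⟩, Fin.ext rfl⟩
    · rintro ⟨i, rfl⟩; exact i.2
  rw [h1, Finset.card_map, h2, Finset.card_map, card_univ, Fintype.card_fin]


open Stmt16Aux in
/-- if `B_{⌈n/2⌉}` has a proper coloring with color set `X`, then `B_n`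
has a proper coloring with `C(n, ⌈n/2⌉) · |X|` colors. -/
theorem stmt16 (n : ℕ) (hn : 2 ≤ n) (X : Type*) [Fintype X]
    (f : Equiv.Perm (Fin (n - n / 2)) → X)
    (hf : ∀ σ τ, (σ * τ⁻¹).IsCycle → f σ ≠ f τ) :
    ∃ g : Equiv.Perm (Fin n) → Fin (n.choose (n - n / 2) * Fintype.card X),
      ∀ σ τ, (σ * τ⁻¹).IsCycle → g σ ≠ g τ := by
  classical
  have hmn : n - n / 2 ≤ n := by omega
  have h2m : n ≤ 2 * (n - n / 2) := by omega
  let Sf : Equiv.Perm (Fin n) → Finset (Fin n) := fun σ => univ.filter fun x => ((σ x : ℕ) < (n - n / 2))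
  have hSf_iff : ∀ σ τ : Equiv.Perm (Fin n),
      Sf σ = Sf τ ↔ (∀ x : Fin n, ((σ x : ℕ) < (n - n / 2) ↔ (τ x : ℕ) < (n - n / 2))) := by
    intro σ τ
    constructor
    · intro h x
      have := Finset.ext_iff.mp h x
      simpa [Sf] using this
    · intro h
      ext x
      simp only [Sf, Finset.mem_filter, Finset.mem_univ, true_and]
      exact h x
  let rep : Finset (Fin n) → Equiv.Perm (Fin n) := fun s =>
    if hs : ∃ ρ : Equiv.Perm (Fin n), Sf ρ = s then Classical.choose hs else 1
  have hrep : ∀ σ : Equiv.Perm (Fin n), Sf (rep (Sf σ)) = Sf σ := by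
    intro σ
    have hex : ∃ ρ : Equiv.Perm (Fin n), Sf ρ = Sf σ := ⟨σ, rfl⟩
    have : rep (Sf σ) = Classical.choose hex := dif_pos hex
    rw [this]
    exact Classical.choose_spec hex
  have hmem : ∀ σ : Equiv.Perm (Fin n), σ * (rep (Sf σ))⁻¹ ∈ presH n (n - n / 2) := by
    intro σ
    rw [mem_presH]
    intro x
    have h := (hSf_iff (rep (Sf σ)) σ).mp (hrep σ) ((rep (Sf σ))⁻¹ x)
    simpa [Equiv.Perm.mul_apply] using h.symm
  have hcardS : ∀ σ : Equiv.Perm (Fin n), (Sf σ).card = (n - n / 2) := fun σ => card_filter n (n - n / 2) hmn σ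
  let hA : Equiv.Perm (Fin n) → presH n (n - n / 2) := fun σ => ⟨σ * (rep (Sf σ))⁻¹, hmem σ⟩
  let col : Equiv.Perm (Fin n) → ({s : Finset (Fin n) // s.card = (n - n / 2)} × X) := fun σ =>
    (⟨Sf σ, hcardS σ⟩, f (phi n (n - n / 2) hmn (hA σ) * psi n (n - n / 2) h2m (hA σ)))
  have hcard : Fintype.card ({s : Finset (Fin n) // s.card = (n - n / 2)} × X)
      = n.choose (n - n / 2) * Fintype.card X := by
    rw [Fintype.card_prod, Fintype.card_finset_len, Fintype.card_fin]
  let e := Fintype.equivFinOfCardEq hcard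
  refine ⟨fun σ => e (col σ), ?_⟩
  intro σ τ hcy hcon
  have hcol : col σ = col τ := e.injective hcon
  have hS : Sf σ = Sf τ := congrArg (fun p => p.1.1) hcol
  have hsnd : f (phi n (n - n / 2) hmn (hA σ) * psi n (n - n / 2) h2m (hA σ))
      = f (phi n (n - n / 2) hmn (hA τ) * psi n (n - n / 2) h2m (hA τ)) := congrArg Prod.snd hcol
  have hab : ((hA σ) * (hA τ)⁻¹ : presH n (n - n / 2)).1 = σ * τ⁻¹ := by
    show (σ * (rep (Sf σ))⁻¹) * (τ * (rep (Sf τ))⁻¹)⁻¹ = σ * τ⁻¹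
    rw [hS]
    group
  set u : presH n (n - n / 2) := (hA σ) * (hA τ)⁻¹ with hu
  have hucyc : u.1.IsCycle := by rw [hab]; exact hcy
  have key : ∀ pa qa pb qb : Equiv.Perm (Fin (n - n / 2)),
      (pa * qa) * (pb * qb)⁻¹ = pa * (qa * qb⁻¹) * pb⁻¹ := by
    intros; group
  have hqa : psi n (n - n / 2) h2m (hA σ) * (psi n (n - n / 2) h2m (hA τ))⁻¹ = psi n (n - n / 2) h2m u := by
    rw [hu, map_mul, map_inv]
  have hpa : phi n (n - n / 2) hmn (hA σ) * (phi n (n - n / 2) hmn (hA τ))⁻¹ = phi n (n - n / 2) hmn u := by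
    rw [hu, map_mul, map_inv]
  rcases supp_cases n (n - n / 2) u hucyc with hc | hc
  · apply hf _ _ ?_ hsnd
    rw [key, hqa, psi_eq_one n (n - n / 2) h2m u hc, mul_one, hpa]
    exact isCycle_phi n (n - n / 2) hmn u hucyc hc
  · have hphi1 : phi n (n - n / 2) hmn u = 1 := phi_eq_one n (n - n / 2) hmn u hc
    have hpb : phi n (n - n / 2) hmn (hA σ) = phi n (n - n / 2) hmn (hA τ) := by
      have h := hpa
      rw [hphi1] at h
      exact mul_inv_eq_one.mp h
    apply hf _ _ ?_ hsnd
    rw [key, hqa, ← hpb]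
    exact (isCycle_psi n (n - n / 2) h2m u hucyc hc).conj
end

section
/- For every n ∈ ℕ₊, the central binomial coefficient satisfies binom(2n, n) ≥ (2^{2n}/√(nπ)) · e^{−2/(15n)}. -/
/-!
Let `a c n = C(2n, n) · √(nπ) · e^{c/n} / 4ⁿ`. Since `C(2n, n) · √n / 4ⁿ = s(2n) / s(n)²` for the
Stirling sequence `s n = n! / (√(2n) (n/e)ⁿ) → √π`, we have `a c n → 1`. For `c ≥ 1/8` the
sequence is nonincreasing from `n = 1` on:
`a c (n+1) / a c n = (2n+1) / (2√(n(n+1))) · e^{-c/(n(n+1))}`, and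
`(2n+1)² = 4n(n+1) + 1 ≤ 4n(n+1) · e^{2c/(n(n+1))}` because `e^t ≥ 1 + t`.
Hence `a c n ≥ 1`, which is the bound; the theorem is the case `c = 2/15`.
-/

open Real Filter Topology Stirling

theorem centralBinom_mul_sqrt_div_four_pow_eq (n : ℕ) :
    n.centralBinom * √n / 4 ^ n = stirlingSeq (2 * n) / stirlingSeq n ^ 2 := by
  have hfac : ((2 * n).factorial : ℝ) = n.centralBinom * n.factorial * n.factorial := by
    rw [Nat.centralBinom_eq_two_mul_choose, two_mul, ← Nat.add_choose_mul_factorial_mul_factorial]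
    push_cast; ring
  have h4 : √(2 * (2 * n : ℕ) : ℝ) = 2 * √n := by
    push_cast
    rw [show (2 : ℝ) * (2 * n) = 2 ^ 2 * n by ring, sqrt_mul (by norm_num), sqrt_sq (by norm_num)]
  simp only [stirlingSeq, hfac, h4]
  rw [sqrt_mul zero_le_two]
  push_cast
  field_simp
  rw [sq_sqrt zero_le_two, ← pow_mul, mul_comm n 2, mul_div_assoc, mul_pow, pow_mul 2]
  norm_num
  ring

theorem tendsto_centralBinom_mul_sqrt_div_four_pow :
    Tendsto (fun n : ℕ ↦ n.centralBinom * √(n * π) / 4 ^ n) atTop (𝓝 1) := by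
  have hs : Tendsto (fun n : ℕ ↦ stirlingSeq (2 * n) / stirlingSeq n ^ 2 * √π) atTop
      (𝓝 (√π / √π ^ 2 * √π)) :=
    ((tendsto_stirlingSeq_sqrt_pi.comp (tendsto_id.const_mul_atTop' two_pos)).div
      (tendsto_stirlingSeq_sqrt_pi.pow 2) (by positivity)).mul_const _
  have hπ : √π ≠ 0 := by positivity
  rw [show √π / √π ^ 2 * √π = 1 by field_simp] at hs
  refine hs.congr fun n ↦ ?_
  rw [← centralBinom_mul_sqrt_div_four_pow_eq, sqrt_mul n.cast_nonneg]
  ring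

noncomputable def scaledCentralBinom (c : ℝ) (n : ℕ) : ℝ :=
  n.centralBinom * √(n * π) * exp (c / n) / 4 ^ n

theorem tendsto_scaledCentralBinom (c : ℝ) :
    Tendsto (scaledCentralBinom c) atTop (𝓝 1) := by
  have he : Tendsto (fun n : ℕ ↦ exp (c / n)) atTop (𝓝 1) := by
    simpa [Function.comp_def] using
      (continuous_exp.tendsto 0).comp (tendsto_const_div_atTop_nhds_zero_nat c)
  have h := tendsto_centralBinom_mul_sqrt_div_four_pow.mul he
  rw [mul_one] at h
  refine h.congr fun n ↦ ?_
  simp only [scaledCentralBinom]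
  ring

theorem two_mul_add_one_mul_exp_le {c x : ℝ} (hc : 1 / 8 ≤ c) (hx : 0 < x) :
    (2 * x + 1) * exp (c / (x + 1)) ≤ 2 * √x * √(x + 1) * exp (c / x) := by
  have hsplit : exp (c / x) = exp (c / (x + 1)) * exp (c / (x * (x + 1))) := by
    rw [← exp_add]; congr 1; field_simp
  have hexp : (2 * x + 1) ^ 2 ≤ 4 * x * (x + 1) * exp (c / (x * (x + 1))) ^ 2 := by
    set t := c / (x * (x + 1)) with ht
    have hct : x * (x + 1) * t = c := by rw [ht]; field_simp
    have hsq : 1 + 2 * t ≤ exp t ^ 2 :=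
      calc 1 + 2 * t ≤ (t + 1) ^ 2 := by nlinarith [sq_nonneg t]
        _ ≤ exp t ^ 2 := pow_le_pow_left₀ (by positivity) (add_one_le_exp t) 2
    nlinarith [mul_le_mul_of_nonneg_left hsq (by positivity : (0 : ℝ) ≤ 4 * x * (x + 1))]
  refine (pow_le_pow_iff_left₀ (by positivity) (by positivity) two_ne_zero).mp ?_
  rw [hsplit, mul_pow, mul_pow, mul_pow, mul_pow, mul_pow, sq_sqrt hx.le, sq_sqrt (by positivity)]
  nlinarith [mul_le_mul_of_nonneg_right hexp (sq_nonneg (exp (c / (x + 1))))]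

theorem scaledCentralBinom_succ_le {c : ℝ} (hc : 1 / 8 ≤ c) {n : ℕ} (hn : n ≠ 0) :
    scaledCentralBinom c (n + 1) ≤ scaledCentralBinom c n := by
  have hn' : (0 : ℝ) < n := by positivity
  have hrec : ((n : ℝ) + 1) * (n + 1).centralBinom = 2 * (2 * n + 1) * n.centralBinom := by
    exact_mod_cast n.succ_mul_centralBinom_succ
  have key : scaledCentralBinom c (n + 1) * (2 * √n * √(n + 1) * exp (c / n))
      = scaledCentralBinom c n * ((2 * n + 1) * exp (c / (n + 1))) := by
    simp only [scaledCentralBinom, sqrt_mul (Nat.cast_nonneg _)]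
    push_cast
    have hs : √((n : ℝ) + 1) ^ 2 = n + 1 := sq_sqrt (by positivity)
    linear_combination √π * exp (c / n) * exp (c / (n + 1)) * √n / (2 * 4 ^ n) *
      ((n + 1).centralBinom * hs + hrec)
  refine le_of_mul_le_mul_right ?_ (by positivity : 0 < 2 * √n * √(n + 1) * exp (c / n))
  rw [key]
  exact mul_le_mul_of_nonneg_left (two_mul_add_one_mul_exp_le hc hn')
    (by unfold scaledCentralBinom; positivity)

theorem one_le_scaledCentralBinom {c : ℝ} (hc : 1 / 8 ≤ c) {n : ℕ} (hn : n ≠ 0) :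
    1 ≤ scaledCentralBinom c n := by
  obtain ⟨m, rfl⟩ := Nat.exists_eq_succ_of_ne_zero hn
  have hanti : Antitone fun k ↦ scaledCentralBinom c (k + 1) :=
    antitone_nat_of_succ_le fun k ↦ scaledCentralBinom_succ_le hc k.succ_ne_zero
  exact hanti.le_of_tendsto ((tendsto_add_atTop_iff_nat 1).mpr (tendsto_scaledCentralBinom c)) m

theorem four_pow_div_sqrt_mul_exp_le_centralBinom {c : ℝ} (hc : 1 / 8 ≤ c) {n : ℕ} (hn : n ≠ 0) :
    4 ^ n / √(n * π) * exp (-c / n) ≤ n.centralBinom := by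
  have h := one_le_scaledCentralBinom hc hn
  have hpos : 0 < √(n * π) := by positivity
  rw [scaledCentralBinom, one_le_div (by positivity)] at h
  rw [div_mul_eq_mul_div, div_le_iff₀ hpos, neg_div, exp_neg, ← div_eq_mul_inv,
    div_le_iff₀ (exp_pos _)]
  linarith

/-- lower bound on the central binomial coefficient:
`C(2n, n) ≥ (2^{2n}/√(nπ)) · e^{-2/(15n)}`. -/
theorem stmt19 (n : ℕ) (hn : 0 < n) :
    (2 : ℝ) ^ (2 * n) / Real.sqrt (n * Real.pi) * Real.exp (-2 / (15 * n))
      ≤ (((2 * n).choose n : ℕ) : ℝ) := by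
  convert four_pow_div_sqrt_mul_exp_le_centralBinom (c := 2 / 15) (by norm_num) hn.ne' using 2
  · rw [pow_mul]
    norm_num
  · ring_nf
  · rfl
end
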